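/- arXiv:2512.13990 — 2 statements merged into one kernel-verified Lean document; each statement's English description precedes it below -/
import Mathlib

section
/- Fix k ≥ 2, order the components of E_k(ω) from left to right as I_k^1, …, I_k^{2^k}, and let J_k^j denote the open interval between I_k^j and I_k^{j+1} (1 ≤ j ≤ 2^k − 1). If j = 2^ℓ m with 1 ≤ ℓ ≤ k−1 and m odd, then J_k^j coincides with the gap J_{k−ℓ}^m of the (k−ℓ)-th stage and its length satisfies |J_k^j| = q_{k−ℓ}·L_{k−ℓ−1} = 2^{ℓ+1} q_{k−ℓ} (∏_{i=k−ℓ}^{k} (1−q_i))^{-1} · |I_k^j|, where |I_k^j| = L_k. -/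
/-- `L_n = 2^{-n} ∏_{i=1}^n (1 - q_i)`. -/
noncomputable def cantorL (q : ℕ → ℝ) (n : ℕ) : ℝ :=
  (∏ i ∈ Finset.Icc 1 n, (1 - q i)) / 2 ^ n

/-- Left endpoint of the `j`-th level-`k` interval `I_k^j` (`1 ≤ j ≤ 2^k`), i.e. the
level-`k` interval whose label `ε = (ε_1,…,ε_k)` has binary value
`v(ε) = ∑ ε_i 2^{k-i} = j - 1`; so `I_k^j = [cantorAIdx q k j, cantorAIdx q k j + L_k]`
and, for `1 ≤ j ≤ 2^k - 1`, the gap `J_k^j` between `I_k^j` and `I_k^{j+1}` is the open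
interval `(cantorAIdx q k j + L_k, cantorAIdx q k (j+1))`. -/
noncomputable def cantorAIdx (q : ℕ → ℝ) (k j : ℕ) : ℝ :=
  ∑ i ∈ Finset.Icc 1 k, if Nat.testBit (j - 1) (k - i) then cantorL q (i - 1) - cantorL q i else 0

/-!
The left endpoint of `I_k^j` is read off the `k` binary digits of `j - 1`, the digit in
position `i` contributing `L_{i-1} - L_i`. For `j = 2^ℓ m` the last `ℓ` digits of `j - 1` are all
ones and those of `j` all zeros, so `I_k^j` is the rightmost level-`k` piece of `I_{k-ℓ}^m` and
`I_k^{j+1}` the leftmost piece of `I_{k-ℓ}^{m+1}`: the gap between them is `J_{k-ℓ}^m`. For odd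
`m` that gap is the middle gap of a level-`(k-ℓ-1)` interval, of length
`L_{k-ℓ-1} - 2 L_{k-ℓ} = q_{k-ℓ} L_{k-ℓ-1}`.
-/

open Finset

@[to_additive sum_Icc_one_add]
theorem Finset.prod_Icc_one_add {M : Type*} [CommMonoid M] (f : ℕ → M) (n ℓ : ℕ) :
    ∏ i ∈ Icc 1 (n + ℓ), f i = (∏ i ∈ Icc 1 n, f i) * ∏ i ∈ Ioc n (n + ℓ), f i := by
  simp only [show ∀ k, Icc 1 k = Ioc 0 k from fun k => Icc_add_one_left_eq_Ioc 0 k]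
  exact (prod_Ioc_consecutive f n.zero_le (n.le_add_right ℓ)).symm

theorem Finset.sum_Ioc_sub_telescope {G : Type*} [AddCommGroup G] (f : ℕ → G) (n ℓ : ℕ) :
    ∑ i ∈ Ioc n (n + ℓ), (f (i - 1) - f i) = f n - f (n + ℓ) := by
  induction ℓ with
  | zero => simp
  | succ ℓ ih =>
    rw [← add_assoc, sum_Ioc_succ_top (by omega), ih, Nat.add_sub_cancel]
    abel

section

variable (q : ℕ → ℝ)

theorem cantorL_add (n ℓ : ℕ) :
    cantorL q (n + ℓ) = cantorL q n * (∏ i ∈ Ioc n (n + ℓ), (1 - q i)) / 2 ^ ℓ := by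
  rw [cantorL, cantorL, prod_Icc_one_add, pow_add]
  field_simp

theorem cantorL_eq_two_pow_mul_inv_prod_mul (n ℓ : ℕ)
    (h : ∏ i ∈ Ioc n (n + ℓ), (1 - q i) ≠ 0) :
    cantorL q n = 2 ^ ℓ * (∏ i ∈ Ioc n (n + ℓ), (1 - q i))⁻¹ * cantorL q (n + ℓ) := by
  rw [cantorL_add]
  field_simp

theorem cantorAIdx_two_pow_mul_add (n ℓ v r : ℕ) (hr : r < 2 ^ ℓ) :
    cantorAIdx q (n + ℓ) (2 ^ ℓ * v + r + 1)
      = cantorAIdx q n (v + 1) + ∑ i ∈ Ioc n (n + ℓ),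
          if r.testBit (n + ℓ - i) then cantorL q (i - 1) - cantorL q i else 0 := by
  rw [cantorAIdx, cantorAIdx, Nat.add_sub_cancel, Nat.add_sub_cancel, sum_Icc_one_add]
  congr 1
  · refine sum_congr rfl fun i hi => ?_
    have high : ¬ n + ℓ - i < ℓ := by grind
    simp only [Nat.testBit_two_pow_mul_add v hr, high, if_false, show n + ℓ - i - ℓ = n - i by omega]
  · refine sum_congr rfl fun i hi => ?_
    have low : n + ℓ - i < ℓ := by grind
    simp only [Nat.testBit_two_pow_mul_add v hr, low, if_true]

theorem cantorAIdx_two_pow_mul_add_one (n ℓ v : ℕ) :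
    cantorAIdx q (n + ℓ) (2 ^ ℓ * v + 1) = cantorAIdx q n (v + 1) := by
  simpa using cantorAIdx_two_pow_mul_add q n ℓ v 0 (by positivity)

theorem cantorAIdx_two_pow_mul_succ_add_cantorL (n ℓ v : ℕ) :
    cantorAIdx q (n + ℓ) (2 ^ ℓ * (v + 1)) + cantorL q (n + ℓ)
      = cantorAIdx q n (v + 1) + cantorL q n := by
  have hlast : 2 ^ ℓ * (v + 1) = 2 ^ ℓ * v + (2 ^ ℓ - 1) + 1 := by
    have := Nat.one_le_two_pow (n := ℓ); rw [mul_add_one]; omega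
  rw [hlast, cantorAIdx_two_pow_mul_add q n ℓ v _ (Nat.sub_lt (by positivity) one_pos)]
  simp only [Nat.testBit_two_pow_sub_one, decide_eq_true_eq]
  rw [sum_congr rfl fun i hi => if_pos (by grind), sum_Ioc_sub_telescope]
  ring

theorem cantorAIdx_odd_gap (n t : ℕ) :
    cantorAIdx q (n + 1) (2 * t + 1 + 1) - (cantorAIdx q (n + 1) (2 * t + 1) + cantorL q (n + 1))
      = q (n + 1) * cantorL q n := by
  have hleft := cantorAIdx_two_pow_mul_add_one q n 1 t
  have hright := cantorAIdx_two_pow_mul_succ_add_cantorL q n 1 t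
  have hL := cantorL_add q n 1
  simp only [pow_one, Nat.Ioc_succ_singleton, prod_singleton] at hleft hright hL
  rw [mul_add_one] at hright
  linear_combination hright - hleft - 2 * hL

end

theorem cantor_even_gap_general (q : ℕ → ℝ) (hq : ∀ i, 1 ≤ i → q i ∈ Set.Ioo (0 : ℝ) 1)
    (k ℓ m j : ℕ) (hk : 2 ≤ k) (hℓ₂ : ℓ ≤ k - 1) (hm : Odd m)
    (hj : j = 2 ^ ℓ * m) :
    Set.Ioo (cantorAIdx q k j + cantorL q k) (cantorAIdx q k (j + 1))
      = Set.Ioo (cantorAIdx q (k - ℓ) m + cantorL q (k - ℓ)) (cantorAIdx q (k - ℓ) (m + 1))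
    ∧ cantorAIdx q k (j + 1) - (cantorAIdx q k j + cantorL q k)
        = q (k - ℓ) * cantorL q (k - ℓ - 1)
    ∧ cantorAIdx q k (j + 1) - (cantorAIdx q k j + cantorL q k)
        = 2 ^ (ℓ + 1) * q (k - ℓ) * (∏ i ∈ Finset.Icc (k - ℓ) k, (1 - q i))⁻¹ * cantorL q k := by
  obtain ⟨n, rfl⟩ : ∃ n, k = n + 1 + ℓ := ⟨k - ℓ - 1, by omega⟩
  obtain ⟨t, rfl⟩ := hm
  subst hj
  simp only [Nat.add_sub_cancel]
  have hright := cantorAIdx_two_pow_mul_add_one q (n + 1) ℓ (2 * t + 1)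
  have hleft := cantorAIdx_two_pow_mul_succ_add_cantorL q (n + 1) ℓ (2 * t)
  have hgap := cantorAIdx_odd_gap q n t
  have hlen := cantorL_eq_two_pow_mul_inv_prod_mul q n (ℓ + 1)
    (prod_ne_zero_iff.2 fun i hi => (sub_pos.2 (hq i (by grind)).2).ne')
  rw [show n + (ℓ + 1) = n + 1 + ℓ by ring, ← Icc_add_one_left_eq_Ioc] at hlen
  rw [hright, hleft]
  exact ⟨rfl, hgap, by rw [hgap, hlen]; ring⟩

/-- for `k ≥ 2` and an even index `j = 2^ℓ m` (`1 ≤ ℓ ≤ k−1`, `m` odd,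
`1 ≤ j ≤ 2^k − 1`), the gap `J_k^j` coincides with the gap `J_{k−ℓ}^m` of the `(k−ℓ)`-th
stage, and its length equals `q_{k−ℓ}·L_{k−ℓ−1} = 2^{ℓ+1} q_{k−ℓ} (∏_{i=k−ℓ}^k (1−q_i))⁻¹·L_k`
(where `|I_k^j| = L_k`). -/
theorem cantor_even_gap (q : ℕ → ℝ) (hq : ∀ i, 1 ≤ i → q i ∈ Set.Ioo (0 : ℝ) 1)
    (k ℓ m j : ℕ) (hk : 2 ≤ k) (hℓ₁ : 1 ≤ ℓ) (hℓ₂ : ℓ ≤ k - 1) (hm : Odd m)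
    (hj : j = 2 ^ ℓ * m) (hj₂ : j ≤ 2 ^ k - 1) :
    Set.Ioo (cantorAIdx q k j + cantorL q k) (cantorAIdx q k (j + 1))
      = Set.Ioo (cantorAIdx q (k - ℓ) m + cantorL q (k - ℓ)) (cantorAIdx q (k - ℓ) (m + 1))
    ∧ cantorAIdx q k (j + 1) - (cantorAIdx q k j + cantorL q k)
        = q (k - ℓ) * cantorL q (k - ℓ - 1)
    ∧ cantorAIdx q k (j + 1) - (cantorAIdx q k j + cantorL q k)
        = 2 ^ (ℓ + 1) * q (k - ℓ) * (∏ i ∈ Finset.Icc (k - ℓ) k, (1 - q i))⁻¹ * cantorL q k :=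
  cantor_even_gap_general q hq k ℓ m j hk hℓ₂ hm hj
end

section
/- Let ω_m (m ∈ ℕ) and ω be elements of (0,1)^ℕ such that ω_m → ω in the product topology (i.e., the n-th coordinate of ω_m converges to the n-th coordinate of ω for every n). For each m let X(ω_m) = Ĉ \ E(ω_m) and X(ω) = Ĉ \ E(ω), where Ĉ is the Riemann sphere (the one-point compactification of ℂ) and E(·) ⊂ [0,1] ⊂ ℝ ⊂ ℂ is the generalized Cantor set. Define the Carathéodory kernel N({X(ω_m)}) as the set of points z ∈ Ĉ for which there exist a neighborhood U of z and M ∈ ℕ such that U ⊆ X(ω_m) for all m > M. Then N({X(ω_m)}) = X(ω). -/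
open Filter

/-- `a_n(ε) = ∑_{k=1}^n ε_k (L_{k-1} - L_k)`. -/
noncomputable def cantorA (q : ℕ → ℝ) (n : ℕ) (ε : ℕ → Bool) : ℝ :=
  ∑ k ∈ Finset.Icc 1 n, if ε k then cantorL q (k - 1) - cantorL q k else 0

/-- The `n`-th stage `E_n(ω)`. -/
noncomputable def cantorStage (q : ℕ → ℝ) (n : ℕ) : Set ℝ :=
  ⋃ ε : ℕ → Bool, Set.Icc (cantorA q n ε) (cantorA q n ε + cantorL q n)

/-- The generalized Cantor set `E(ω) = ⋂_{n ≥ 1} E_n(ω)`. -/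
noncomputable def genCantorSet (q : ℕ → ℝ) : Set ℝ :=
  ⋂ n ∈ Set.Ici 1, cantorStage q n

/-- `E(ω)` regarded as a subset of the Riemann sphere `Ĉ = OnePoint ℂ`
(via `ℝ ⊂ ℂ ⊂ Ĉ`). -/
noncomputable def genCantorSetSphere (q : ℕ → ℝ) : Set (OnePoint ℂ) :=
  (fun x : ℝ => ((x : ℂ) : OnePoint ℂ)) '' genCantorSet q

/-- The complementary domain `X(ω) = Ĉ \ E(ω)`. -/
noncomputable def cantorComplement (q : ℕ → ℝ) : Set (OnePoint ℂ) :=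
  (genCantorSetSphere q)ᶜ

open Topology Set

/-!
The interval `[a_n(ω, ε), a_n(ω, ε) + L_n(ω)]` of the `n`-th stage depends continuously on
`ω_1, …, ω_n`, and for fixed `n` there are only finitely many of them. So a point `x ∉ E(ω)`, which
misses some stage `E_N(ω)`, keeps a neighbourhood disjoint from `E_N(ω_m) ⊇ E(ω_m)` for all large
`m`; points of `Ĉ` off the segment `[0, 1]` are separated from every `E(ω_m)` by a single
neighbourhood. Conversely, every left endpoint `a_n(ω_m, ε)` lies in `E(ω_m)`, and for `x ∈ E(ω)`
these endpoints converge, as `m → ∞`, to an endpoint `a_n(ω, ε)` within `L_n(ω) ≤ 2⁻ⁿ` of `x`; so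
no neighbourhood of `x` avoids `E(ω_m)` for all large `m`.
-/

def caratheodoryKernel {X : Type*} [TopologicalSpace X] (D : ℕ → Set X) : Set X :=
  {z | ∃ U ∈ 𝓝 z, ∃ M : ℕ, ∀ m > M, U ⊆ D m}

theorem mem_caratheodoryKernel_iff {X : Type*} [TopologicalSpace X] {D : ℕ → Set X} {z : X} :
    z ∈ caratheodoryKernel D ↔ ∀ᶠ p in 𝓝 z ×ˢ atTop, p.1 ∈ D p.2 := by
  constructor
  · rintro ⟨U, hU, M, hM⟩
    exact mem_of_superset (prod_mem_prod hU (Ioi_mem_atTop M)) fun p hp => hM _ hp.2 hp.1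
  · intro h
    obtain ⟨U, hU, V, hV, hUV⟩ := mem_prod_iff.1 h
    obtain ⟨M, hM⟩ := mem_atTop_sets.1 hV
    exact ⟨U, hU, M, fun m hm y hy => @hUV (y, m) ⟨hy, hM m hm.le⟩⟩

theorem Topology.IsInducing.eventually_nhds_prod_notMem_image {X Y ι : Type*}
    [TopologicalSpace X] [TopologicalSpace Y] {g : X → Y} (hg : IsInducing g) {l : Filter ι}
    {S : ι → Set X} {x : X} (h : ∀ᶠ p in 𝓝 x ×ˢ l, p.1 ∉ S p.2) :
    ∀ᶠ p in 𝓝 (g x) ×ˢ l, p.1 ∉ g '' S p.2 := by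
  rw [hg.nhds_eq_comap, ← comap_id (f := l), prod_comap_comap_eq, eventually_comap] at h
  filter_upwards [h] with p hp
  rintro ⟨y, hy, hyp⟩
  exact hp (y, p.2) (Prod.ext hyp rfl) hy

theorem eventually_nhds_prod_notMem_Icc {α ι : Type*} [TopologicalSpace α] [LinearOrder α]
    [OrderClosedTopology α] {l : Filter ι} {a b : ι → α} {A B x : α}
    (ha : Tendsto a l (𝓝 A)) (hb : Tendsto b l (𝓝 B)) (hx : x ∉ Icc A B) :
    ∀ᶠ p in 𝓝 x ×ˢ l, p.1 ∉ Icc (a p.2) (b p.2) := by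
  rw [mem_Icc, not_and_or, not_le, not_le] at hx
  rcases hx with hx | hx
  · filter_upwards [tendsto_fst.eventually_lt (ha.comp tendsto_snd) hx] with p hp
      using fun h => hp.not_ge h.1
  · filter_upwards [(hb.comp tendsto_snd).eventually_lt tendsto_fst hx] with p hp
      using fun h => hp.not_ge h.2

section CantorSet

variable {q : ℕ → ℝ}

theorem cantorL_succ (q : ℕ → ℝ) (n : ℕ) :
    cantorL q (n + 1) = cantorL q n * (1 - q (n + 1)) / 2 := by
  rw [cantorL, cantorL, Finset.prod_Icc_succ_top (Nat.le_add_left 1 n)]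
  ring

theorem cantorL_zero (q : ℕ → ℝ) : cantorL q 0 = 1 := by
  simp [cantorL]

theorem cantorA_zero (q : ℕ → ℝ) (ε : ℕ → Bool) : cantorA q 0 ε = 0 := by
  simp [cantorA]

theorem cantorA_succ (q : ℕ → ℝ) (n : ℕ) (ε : ℕ → Bool) :
    cantorA q (n + 1) ε
      = cantorA q n ε + if ε (n + 1) then cantorL q n - cantorL q (n + 1) else 0 := by
  rw [cantorA, cantorA, Finset.sum_Icc_succ_top (Nat.le_add_left 1 n), Nat.add_sub_cancel]

theorem cantorA_eq_filter (q : ℕ → ℝ) (n : ℕ) (ε : ℕ → Bool) :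
    cantorA q n ε = cantorA q n fun k => decide (k ∈ (Finset.Icc 1 n).filter fun k => ε k) := by
  refine Finset.sum_congr rfl fun k hk => ?_
  simp [hk]

theorem cantorA_eq_of_le (q : ℕ → ℝ) {ε : ℕ → Bool} {n : ℕ} (hε : ∀ k, n < k → ε k = false)
    {m : ℕ} (hnm : n ≤ m) : cantorA q m ε = cantorA q n ε := by
  induction m, hnm using Nat.le_induction with
  | base => rfl
  | succ m hnm ih =>
    rw [cantorA_succ, ih, hε (m + 1) (by omega), if_neg Bool.false_ne_true, add_zero]

variable (hq : ∀ n, 1 ≤ n → q n ∈ Icc (0 : ℝ) 1)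
include hq

theorem cantorL_nonneg (n : ℕ) : 0 ≤ cantorL q n :=
  div_nonneg (Finset.prod_nonneg fun i hi => sub_nonneg.2 (hq i (Finset.mem_Icc.1 hi).1).2)
    (by positivity)

theorem cantorL_succ_le (n : ℕ) : cantorL q (n + 1) ≤ cantorL q n := by
  have hqn := hq (n + 1) (Nat.le_add_left 1 n)
  have hLn := cantorL_nonneg hq n
  rw [cantorL_succ]
  nlinarith [hqn.1]

theorem cantorL_le_pow (n : ℕ) : cantorL q n ≤ (1 / 2) ^ n := by
  rw [cantorL, one_div_pow]
  gcongr
  exact Finset.prod_le_one (fun i hi => sub_nonneg.2 (hq i (Finset.mem_Icc.1 hi).1).2)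
    fun i hi => sub_le_self _ (hq i (Finset.mem_Icc.1 hi).1).1

theorem tendsto_cantorL_atTop : Tendsto (cantorL q) atTop (𝓝 0) :=
  squeeze_zero (cantorL_nonneg hq) (cantorL_le_pow hq)
    (tendsto_pow_atTop_nhds_zero_of_lt_one (by norm_num) (by norm_num))

theorem cantorA_mem_Icc (ε : ℕ → Bool) {m n : ℕ} (hmn : m ≤ n) :
    cantorA q n ε ∈ Icc (cantorA q m ε) (cantorA q m ε + (cantorL q m - cantorL q n)) := by
  induction n, hmn using Nat.le_induction with
  | base => simp
  | succ n hmn ih =>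
    have hL := cantorL_succ_le hq n
    rw [cantorA_succ]
    split_ifs <;> constructor <;> linarith [ih.1, ih.2]

theorem cantorStage_subset_Icc (n : ℕ) : cantorStage q n ⊆ Icc 0 1 := by
  intro y hy
  obtain ⟨ε, hy₁, hy₂⟩ := mem_iUnion.1 hy
  have h := cantorA_mem_Icc hq ε (Nat.zero_le n)
  rw [cantorA_zero, cantorL_zero] at h
  exact ⟨h.1.trans hy₁, by linarith [h.2]⟩

theorem genCantorSet_subset_Icc : genCantorSet q ⊆ Icc 0 1 :=
  (biInter_subset_of_mem (mem_Ici.2 le_rfl)).trans (cantorStage_subset_Icc hq 1)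

theorem cantorA_mem_genCantorSet (n : ℕ) (ε : ℕ → Bool) : cantorA q n ε ∈ genCantorSet q := by
  rw [cantorA_eq_filter]
  set ε' : ℕ → Bool := fun k => decide (k ∈ (Finset.Icc 1 n).filter fun k => ε k)
  have hε' : ∀ k, n < k → ε' k = false := fun k hk => by simp [ε']; omega
  refine mem_iInter₂.2 fun m _ => mem_iUnion.2 ⟨ε', ?_⟩
  rw [← cantorA_eq_of_le q hε' (le_max_right m n)]
  exact Icc_subset_Icc_right (by linarith [cantorL_nonneg hq (max m n)])
    (cantorA_mem_Icc hq ε' (le_max_left m n))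

end CantorSet

theorem isInducing_real_onePoint :
    IsInducing fun x : ℝ => ((x : ℂ) : OnePoint ℂ) :=
  OnePoint.isOpenEmbedding_coe.isInducing.comp Complex.isometry_ofReal.isEmbedding.isInducing

section Convergence

variable {ω : ℕ → ℕ → ℝ} {ωlim : ℕ → ℝ}
  (hconv : ∀ n, 1 ≤ n → Tendsto (fun m => ω m n) atTop (𝓝 (ωlim n)))
include hconv

theorem tendsto_cantorL (n : ℕ) :
    Tendsto (fun m => cantorL (ω m) n) atTop (𝓝 (cantorL ωlim n)) :=
  (tendsto_finsetProd _ fun i hi =>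
    tendsto_const_nhds.sub (hconv i (Finset.mem_Icc.1 hi).1)).div_const _

theorem tendsto_cantorA (n : ℕ) (ε : ℕ → Bool) :
    Tendsto (fun m => cantorA (ω m) n ε) atTop (𝓝 (cantorA ωlim n ε)) := by
  refine tendsto_finsetSum _ fun k _ => ?_
  split_ifs
  · exact (tendsto_cantorL hconv (k - 1)).sub (tendsto_cantorL hconv k)
  · exact tendsto_const_nhds

theorem eventually_nhds_prod_notMem_genCantorSet {x : ℝ} (hx : x ∉ genCantorSet ωlim) :
    ∀ᶠ p in 𝓝 x ×ˢ atTop, p.1 ∉ genCantorSet (ω p.2) := by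
  obtain ⟨N, hN, hxN⟩ : ∃ N, 1 ≤ N ∧ x ∉ cantorStage ωlim N := by
    simpa [genCantorSet] using hx
  have hfar : ∀ s ∈ (Finset.Icc 1 N).powerset, ∀ᶠ p in 𝓝 x ×ˢ atTop,
      p.1 ∉ Icc (cantorA (ω p.2) N fun k => decide (k ∈ s))
        (cantorA (ω p.2) N (fun k => decide (k ∈ s)) + cantorL (ω p.2) N) :=
    fun s _ => eventually_nhds_prod_notMem_Icc (tendsto_cantorA hconv N _)
      ((tendsto_cantorA hconv N _).add (tendsto_cantorL hconv N))
      fun h => hxN (mem_iUnion.2 ⟨_, h⟩)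
  filter_upwards [(Finset.eventually_all _).2 hfar] with p hp hpE
  obtain ⟨ε, hε⟩ := mem_iUnion.1 (mem_iInter₂.1 hpE N hN)
  rw [cantorA_eq_filter] at hε
  exact hp _ (Finset.mem_powerset.2 (Finset.filter_subset _ _)) hε

theorem frequently_nhds_prod_mem_genCantorSet (hω : ∀ m n, 1 ≤ n → ω m n ∈ Icc (0 : ℝ) 1)
    (hωlim : ∀ n, 1 ≤ n → ωlim n ∈ Icc (0 : ℝ) 1) {x : ℝ} (hx : x ∈ genCantorSet ωlim) :
    ∃ᶠ p in 𝓝 x ×ˢ atTop, p.1 ∈ genCantorSet (ω p.2) := by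
  rw [(Metric.nhds_basis_ball.prod atTop_basis).frequently_iff]
  rintro ⟨δ, M⟩ ⟨hδ, -⟩
  obtain ⟨n, hLn, hn⟩ :=
    (((tendsto_cantorL_atTop hωlim).eventually (gt_mem_nhds hδ)).and (eventually_ge_atTop 1)).exists
  obtain ⟨ε, hxε⟩ := mem_iUnion.1 (mem_iInter₂.1 hx n hn)
  have ha : cantorA ωlim n ε ∈ Metric.ball x δ :=
    (Real.dist_le_of_mem_Icc ⟨le_rfl, hxε.1.trans hxε.2⟩ hxε).trans_lt (by simpa using hLn)
  obtain ⟨m, hm, hMm⟩ := (((tendsto_cantorA hconv n ε).eventually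
    (Metric.isOpen_ball.mem_nhds ha)).and (eventually_ge_atTop M)).exists
  exact ⟨(cantorA (ω m) n ε, m), ⟨hm, hMm⟩, cantorA_mem_genCantorSet (hω m) n ε⟩

theorem eventually_nhds_prod_notMem_genCantorSetSphere
    (hω : ∀ m n, 1 ≤ n → ω m n ∈ Icc (0 : ℝ) 1) {z : OnePoint ℂ}
    (hz : z ∉ genCantorSetSphere ωlim) :
    ∀ᶠ p in 𝓝 z ×ˢ atTop, p.1 ∉ genCantorSetSphere (ω p.2) := by
  by_cases hz₀₁ : z ∈ (fun x : ℝ => ((x : ℂ) : OnePoint ℂ)) '' Icc 0 1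
  · obtain ⟨x, -, rfl⟩ := hz₀₁
    exact isInducing_real_onePoint.eventually_nhds_prod_notMem_image
      (S := fun m => genCantorSet (ω m))
      (eventually_nhds_prod_notMem_genCantorSet hconv fun hx => hz ⟨x, hx, rfl⟩)
  · have hclosed :=
      ((isCompact_Icc (a := (0 : ℝ)) (b := 1)).image isInducing_real_onePoint.continuous).isClosed
    filter_upwards [Eventually.prod_inl (hclosed.isOpen_compl.mem_nhds hz₀₁) atTop] with p hp hpE
    exact hp (image_mono (genCantorSet_subset_Icc (hω p.2)) hpE)

theorem frequently_nhds_prod_mem_genCantorSetSphere (hω : ∀ m n, 1 ≤ n → ω m n ∈ Icc (0 : ℝ) 1)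
    (hωlim : ∀ n, 1 ≤ n → ωlim n ∈ Icc (0 : ℝ) 1) {x : ℝ} (hx : x ∈ genCantorSet ωlim) :
    ∃ᶠ p in 𝓝 ((x : ℂ) : OnePoint ℂ) ×ˢ atTop, p.1 ∈ genCantorSetSphere (ω p.2) :=
  ((isInducing_real_onePoint.continuous.tendsto x).prodMap tendsto_id).frequently
    ((frequently_nhds_prod_mem_genCantorSet hconv hω hωlim hx).mono fun _ hp =>
      mem_image_of_mem _ hp)

end Convergence

/-- if `ω_m → ω` coordinatewise in `(0,1)^ℕ`, then the Carathéodory kernel of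
the domains `X(ω_m) = Ĉ \ E(ω_m)` — the set of points `z` having a neighborhood `U` with
`U ⊆ X(ω_m)` for all sufficiently large `m` — equals `X(ω)`. -/
theorem caratheodory_kernel_of_convergent (ω : ℕ → ℕ → ℝ) (ωlim : ℕ → ℝ)
    (hω : ∀ m n, 1 ≤ n → ω m n ∈ Set.Ioo (0 : ℝ) 1)
    (hωlim : ∀ n, 1 ≤ n → ωlim n ∈ Set.Ioo (0 : ℝ) 1)
    (hconv : ∀ n, 1 ≤ n → Tendsto (fun m => ω m n) atTop (nhds (ωlim n))) :
    {z : OnePoint ℂ | ∃ U ∈ nhds z, ∃ M : ℕ, ∀ m > M, U ⊆ cantorComplement (ω m)}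
      = cantorComplement ωlim := by
  have hωI : ∀ m n, 1 ≤ n → ω m n ∈ Icc (0 : ℝ) 1 := fun m n hn =>
    Ioo_subset_Icc_self (hω m n hn)
  have hωlimI : ∀ n, 1 ≤ n → ωlim n ∈ Icc (0 : ℝ) 1 := fun n hn =>
    Ioo_subset_Icc_self (hωlim n hn)
  ext z
  refine (mem_caratheodoryKernel_iff (D := fun m => cantorComplement (ω m))).trans
    ⟨fun h hz => ?_, eventually_nhds_prod_notMem_genCantorSetSphere hconv hωI⟩
  obtain ⟨x, hx, rfl⟩ := hz
  exact frequently_nhds_prod_mem_genCantorSetSphere hconv hωI hωlimI hx h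
end
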